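/- arXiv:1712.09283 — 2 statements merged into one kernel-verified Lean document; each statement's English description precedes it below -/
import Mathlib

section
/- Let E be an even-contact structure on an open set U ⊆ ℝ⁴. Then there exists a unique line field W ⊆ E that is a kernel of E, i.e. a rank-1 subdistribution W of E such that for every smooth local section V of W and every smooth local section Z of E, the Lie bracket [V,Z] is again a local section of E; any two such line fields coincide at every point of U. -/
noncomputable section

open Set

/-- `ℝ⁴`. -/
abbrev R4 : Type := Fin 4 → ℝ

/-- The Lie bracket `[V, W]` of two vector fields on `ℝ⁴`. -/
def lieB (V W : R4 → R4) : R4 → R4 :=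
  fun q => fderiv ℝ W q (V q) - fderiv ℝ V q (W q)

/-- `V` is a smooth local section of the distribution `P` near the point `q`,
defined on an open neighbourhood of `q` inside `U`. -/
def IsLocalSectionAt (U : Set R4) (P : R4 → Submodule ℝ R4) (V : R4 → R4) (q : R4) : Prop :=
  ∃ s : Set R4, IsOpen s ∧ s ⊆ U ∧ q ∈ s ∧ ContDiffOn ℝ (⊤ : ℕ∞) V s ∧ ∀ x ∈ s, V x ∈ P x

/-- `E` is an even-contact structure on the open set `U ⊆ ℝ⁴`: a 3-plane distribution,
locally spanned by three pointwise linearly independent smooth vector fields, such that at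
every point of `U` some two smooth local sections of `E` have a bracket escaping `E`. -/
def IsEvenContactOn (U : Set R4) (E : R4 → Submodule ℝ R4) : Prop :=
  (∀ q ∈ U, ∃ (Z₁ Z₂ Z₃ : R4 → R4) (s : Set R4), IsOpen s ∧ s ⊆ U ∧ q ∈ s ∧
    ContDiffOn ℝ (⊤ : ℕ∞) Z₁ s ∧ ContDiffOn ℝ (⊤ : ℕ∞) Z₂ s ∧ ContDiffOn ℝ (⊤ : ℕ∞) Z₃ s ∧
    ∀ x ∈ s, LinearIndependent ℝ ![Z₁ x, Z₂ x, Z₃ x] ∧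
      E x = Submodule.span ℝ {Z₁ x, Z₂ x, Z₃ x}) ∧
  ∀ q ∈ U, ∃ Z₁ Z₂ : R4 → R4,
    IsLocalSectionAt U E Z₁ q ∧ IsLocalSectionAt U E Z₂ q ∧ lieB Z₁ Z₂ q ∉ E q

/-- `W` is a line field on `U`: a rank-1 smooth distribution, locally spanned by a
nonvanishing smooth vector field. -/
def IsLineFieldOn (U : Set R4) (W : R4 → Submodule ℝ R4) : Prop :=
  ∀ q ∈ U, ∃ (V : R4 → R4) (s : Set R4), IsOpen s ∧ s ⊆ U ∧ q ∈ s ∧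
    ContDiffOn ℝ (⊤ : ℕ∞) V s ∧ ∀ x ∈ s, V x ≠ 0 ∧ W x = Submodule.span ℝ {V x}

/-- `W` is a kernel of `E` on `U`: a line field contained in `E` such that the bracket of any
smooth local section of `W` with any smooth local section of `E` is again a section of `E`. -/
def IsKernelOf (U : Set R4) (E W : R4 → Submodule ℝ R4) : Prop :=
  IsLineFieldOn U W ∧ (∀ q ∈ U, W q ≤ E q) ∧
  ∀ q ∈ U, ∀ V Z : R4 → R4,
    IsLocalSectionAt U W V q → IsLocalSectionAt U E Z q → lieB V Z q ∈ E q

namespace S8aux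


/-- The 4×4 matrix with rows `Z₁ x, Z₂ x, Z₃ x, w`. -/
def mat (Z₁ Z₂ Z₃ : R4 → R4) (x w : R4) : Matrix (Fin 4) (Fin 4) ℝ :=
  Matrix.of ![Z₁ x, Z₂ x, Z₃ x, w]

/-- The defining 1-form: determinant against the frame. -/
def af (Z₁ Z₂ Z₃ : R4 → R4) (x : R4) (w : R4) : ℝ := (mat Z₁ Z₂ Z₃ x w).det

lemma mat_update (Z₁ Z₂ Z₃ : R4 → R4) (x u w : R4) :
    Matrix.updateRow (mat Z₁ Z₂ Z₃ x u) 3 w = mat Z₁ Z₂ Z₃ x w := by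
  ext i j
  fin_cases i <;> simp [mat, Matrix.updateRow_apply]

lemma af_add (Z₁ Z₂ Z₃ : R4 → R4) (x : R4) (u v : R4) :
    af Z₁ Z₂ Z₃ x (u + v) = af Z₁ Z₂ Z₃ x u + af Z₁ Z₂ Z₃ x v := by
  unfold af
  rw [← mat_update Z₁ Z₂ Z₃ x u (u + v), Matrix.det_updateRow_add,
    mat_update Z₁ Z₂ Z₃ x u u, mat_update Z₁ Z₂ Z₃ x u v]

lemma af_smul (Z₁ Z₂ Z₃ : R4 → R4) (x : R4) (c : ℝ) (u : R4) :
    af Z₁ Z₂ Z₃ x (c • u) = c * af Z₁ Z₂ Z₃ x u := by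
  unfold af
  rw [← mat_update Z₁ Z₂ Z₃ x u (c • u), Matrix.det_updateRow_smul,
    mat_update Z₁ Z₂ Z₃ x u u]

/-- `af` as a linear map in the last argument. -/
def afL (Z₁ Z₂ Z₃ : R4 → R4) (x : R4) : R4 →ₗ[ℝ] ℝ where
  toFun := af Z₁ Z₂ Z₃ x
  map_add' := af_add Z₁ Z₂ Z₃ x
  map_smul' := af_smul Z₁ Z₂ Z₃ x

@[simp] lemma afL_apply (Z₁ Z₂ Z₃ : R4 → R4) (x w : R4) :
    afL Z₁ Z₂ Z₃ x w = af Z₁ Z₂ Z₃ x w := rfl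

lemma af_sub (Z₁ Z₂ Z₃ : R4 → R4) (x : R4) (u v : R4) :
    af Z₁ Z₂ Z₃ x (u - v) = af Z₁ Z₂ Z₃ x u - af Z₁ Z₂ Z₃ x v :=
  map_sub (afL Z₁ Z₂ Z₃ x) u v

lemma af_zero (Z₁ Z₂ Z₃ : R4 → R4) (x : R4) : af Z₁ Z₂ Z₃ x 0 = 0 :=
  map_zero (afL Z₁ Z₂ Z₃ x)

lemma range_triple (a b c : R4) : Set.range ![a, b, c] = {a, b, c} := by
  ext y
  constructor
  · rintro ⟨i, rfl⟩
    fin_cases i <;> simp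
  · rintro (rfl | rfl | rfl)
    exacts [⟨0, rfl⟩, ⟨1, rfl⟩, ⟨2, rfl⟩]

lemma mem_span_triple {a b c v : R4} :
    v ∈ Submodule.span ℝ ({a, b, c} : Set R4) ↔
      ∃ x y z : ℝ, v = x • a + y • b + z • c := by
  constructor
  · intro hv
    rw [Submodule.mem_span_insert] at hv
    obtain ⟨x, w, hw, rfl⟩ := hv
    rw [Submodule.mem_span_insert] at hw
    obtain ⟨y, u, hu, rfl⟩ := hw
    rw [Submodule.mem_span_singleton] at hu
    obtain ⟨z, rfl⟩ := hu
    exact ⟨x, y, z, by abel⟩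
  · rintro ⟨x, y, z, rfl⟩
    have ha : a ∈ Submodule.span ℝ ({a, b, c} : Set R4) :=
      Submodule.subset_span (by simp)
    have hb : b ∈ Submodule.span ℝ ({a, b, c} : Set R4) :=
      Submodule.subset_span (by simp)
    have hc : c ∈ Submodule.span ℝ ({a, b, c} : Set R4) :=
      Submodule.subset_span (by simp)
    exact Submodule.add_mem _ (Submodule.add_mem _ (Submodule.smul_mem _ _ ha)
      (Submodule.smul_mem _ _ hb)) (Submodule.smul_mem _ _ hc)

lemma snoc_eq (a b c w : R4) : (Fin.snoc ![a, b, c] w : Fin 4 → R4) = ![a, b, c, w] := by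
  funext i
  fin_cases i <;> rfl

lemma af_eq_zero_iff {Z₁ Z₂ Z₃ : R4 → R4} {x : R4}
    (h : LinearIndependent ℝ ![Z₁ x, Z₂ x, Z₃ x]) (w : R4) :
    af Z₁ Z₂ Z₃ x w = 0 ↔ w ∈ Submodule.span ℝ ({Z₁ x, Z₂ x, Z₃ x} : Set R4) := by
  constructor
  · intro haf
    by_contra hw
    have hli : LinearIndependent ℝ ![Z₁ x, Z₂ x, Z₃ x, w] := by
      rw [← snoc_eq]
      refine linearIndependent_fin_snoc.2 ⟨h, ?_⟩
      rwa [range_triple]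
    have : LinearIndependent ℝ (fun i => (mat Z₁ Z₂ Z₃ x w) i) := hli
    have hunit : IsUnit (mat Z₁ Z₂ Z₃ x w) :=
      Matrix.linearIndependent_rows_iff_isUnit.1 this
    have : IsUnit (mat Z₁ Z₂ Z₃ x w).det := (Matrix.isUnit_iff_isUnit_det _).1 hunit
    exact this.ne_zero haf
  · intro hw
    obtain ⟨p, q, r, rfl⟩ := mem_span_triple.1 hw
    rw [af_add, af_add, af_smul, af_smul, af_smul]
    have h1 : af Z₁ Z₂ Z₃ x (Z₁ x) = 0 :=
      Matrix.det_zero_of_row_eq (show (0 : Fin 4) ≠ 3 by decide)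
        rfl
    have h2 : af Z₁ Z₂ Z₃ x (Z₂ x) = 0 :=
      Matrix.det_zero_of_row_eq (show (1 : Fin 4) ≠ 3 by decide)
        rfl
    have h3 : af Z₁ Z₂ Z₃ x (Z₃ x) = 0 :=
      Matrix.det_zero_of_row_eq (show (2 : Fin 4) ≠ 3 by decide)
        rfl
    rw [h1, h2, h3]
    ring


section Smooth
variable {s : Set R4}

lemma contDiffOn_det {g : R4 → Matrix (Fin 4) (Fin 4) ℝ}
    (h : ∀ i j, ContDiffOn ℝ (⊤ : ℕ∞) (fun x => g x i j) s) :
    ContDiffOn ℝ (⊤ : ℕ∞) (fun x => (g x).det) s := by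
  have : (fun x => (g x).det) =
      fun x => ∑ σ : Equiv.Perm (Fin 4),
        ((Equiv.Perm.sign σ : ℤ) : ℝ) * ∏ i, g x (σ i) i := by
    funext x
    rw [Matrix.det_apply]
    congr 1
    funext σ
    simp [Units.smul_def, zsmul_eq_mul]
  rw [this]
  exact ContDiffOn.sum fun σ _ =>
    contDiffOn_const.mul (contDiffOn_prod fun i _ => h (σ i) i)

lemma contDiffOn_af {Z₁ Z₂ Z₃ Wf : R4 → R4}
    (h₁ : ContDiffOn ℝ (⊤ : ℕ∞) Z₁ s) (h₂ : ContDiffOn ℝ (⊤ : ℕ∞) Z₂ s) (h₃ : ContDiffOn ℝ (⊤ : ℕ∞) Z₃ s)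
    (hW : ContDiffOn ℝ (⊤ : ℕ∞) Wf s) :
    ContDiffOn ℝ (⊤ : ℕ∞) (fun x => af Z₁ Z₂ Z₃ x (Wf x)) s := by
  refine contDiffOn_det fun i j => ?_
  fin_cases i
  · exact contDiffOn_pi.1 h₁ j
  · exact contDiffOn_pi.1 h₂ j
  · exact contDiffOn_pi.1 h₃ j
  · exact contDiffOn_pi.1 hW j

lemma contDiffOn_lieB {V W : R4 → R4} (hs : IsOpen s)
    (hV : ContDiffOn ℝ (⊤ : ℕ∞) V s) (hW : ContDiffOn ℝ (⊤ : ℕ∞) W s) :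
    ContDiffOn ℝ (⊤ : ℕ∞) (lieB V W) s := by
  have hDV : ContDiffOn ℝ (⊤ : ℕ∞) (fderiv ℝ V) s := hV.fderiv_of_isOpen hs (by simp)
  have hDW : ContDiffOn ℝ (⊤ : ℕ∞) (fderiv ℝ W) s := hW.fderiv_of_isOpen hs (by simp)
  exact (hDW.clm_apply hV).sub (hDV.clm_apply hW)

lemma diffAt {F : Type*} [NormedAddCommGroup F] [NormedSpace ℝ F]
    {X : R4 → F} (hs : IsOpen s) (hX : ContDiffOn ℝ (⊤ : ℕ∞) X s)
    {x : R4} (hx : x ∈ s) : DifferentiableAt ℝ X x :=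
  (hX.differentiableOn (by simp)).differentiableAt (hs.mem_nhds hx)

end Smooth

section Key
variable {Z₁ Z₂ Z₃ : R4 → R4} {s : Set R4}

lemma pi_expand (w : R4) : w = ∑ k : Fin 4, w k • (Pi.single k 1 : R4) := by
  funext j
  rw [Finset.sum_apply]
  simp [Pi.single_apply]

lemma af_expand (x w : R4) :
    af Z₁ Z₂ Z₃ x w = ∑ k : Fin 4, w k * af Z₁ Z₂ Z₃ x (Pi.single k 1 : R4) := by
  conv_lhs => rw [pi_expand w, ← afL_apply, map_sum]
  simp [af_smul]

/-- If `X` is a local section killed by the 1-form `af` and `X x = 0`, then the image of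
`fderiv X x` is also killed by `af x`. -/
lemma key_zero {X : R4 → R4} (hs : IsOpen s)
    (h₁ : ContDiffOn ℝ (⊤ : ℕ∞) Z₁ s) (h₂ : ContDiffOn ℝ (⊤ : ℕ∞) Z₂ s) (h₃ : ContDiffOn ℝ (⊤ : ℕ∞) Z₃ s)
    (hX : ContDiffOn ℝ (⊤ : ℕ∞) X s)
    (hXmem : ∀ y ∈ s, af Z₁ Z₂ Z₃ y (X y) = 0)
    {x : R4} (hx : x ∈ s) (hX0 : X x = 0) (v : R4) :
    af Z₁ Z₂ Z₃ x (fderiv ℝ X x v) = 0 := by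
  set g : Fin 4 → R4 → ℝ := fun k y => af Z₁ Z₂ Z₃ y (Pi.single k 1 : R4) with hg
  have hgsm : ∀ k, ContDiffOn ℝ (⊤ : ℕ∞) (g k) s := fun k =>
    contDiffOn_af h₁ h₂ h₃ contDiffOn_const
  have hXd : HasFDerivAt X (fderiv ℝ X x) x := (diffAt hs hX hx).hasFDerivAt
  have hXk : ∀ k, HasFDerivAt (fun y => X y k)
      ((ContinuousLinearMap.proj k).comp (fderiv ℝ X x)) x :=
    hasFDerivAt_pi'.1 hXd
  have hgk : ∀ k : Fin 4, HasFDerivAt (g k) (fderiv ℝ (g k) x) x := fun k =>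
    (diffAt hs (hgsm k) hx).hasFDerivAt
  have hsum : HasFDerivAt (fun y => ∑ k : Fin 4, X y k * g k y)
      (∑ k : Fin 4, ((X x k) • fderiv ℝ (g k) x +
        (g k x) • ((ContinuousLinearMap.proj k).comp (fderiv ℝ X x)))) x :=
    HasFDerivAt.fun_sum fun k _ => (hXk k).mul (hgk k)
  have hzero : fderiv ℝ (fun y => ∑ k : Fin 4, X y k * g k y) x = 0 := by
    have hev : (fun y => ∑ k : Fin 4, X y k * g k y) =ᶠ[nhds x] (fun _ => (0:ℝ)) := by
      filter_upwards [hs.mem_nhds hx] with y hy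
      rw [← af_expand]
      exact hXmem y hy
    rw [hev.fderiv_eq, fderiv_fun_const]
    rfl
  have heq := hsum.fderiv
  rw [hzero] at heq
  have happ := congrArg (fun L : R4 →L[ℝ] ℝ => L v) heq.symm
  simp only [ContinuousLinearMap.zero_apply, ContinuousLinearMap.sum_apply,
    ContinuousLinearMap.add_apply, ContinuousLinearMap.coe_smul', Pi.smul_apply,
    ContinuousLinearMap.comp_apply, ContinuousLinearMap.proj_apply, hX0,
    Pi.zero_apply, zero_smul, zero_add, smul_eq_mul] at happ
  rw [af_expand]
  rw [show ∑ k : Fin 4, (fderiv ℝ X x v) k * g k x =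
    ∑ k : Fin 4, g k x * (fderiv ℝ X x) v k from Finset.sum_congr rfl fun k _ => mul_comm _ _]
  exact happ

end Key

section Dep
variable {Z₁ Z₂ Z₃ : R4 → R4} {s : Set R4}

lemma bracket_value_dep (hs : IsOpen s)
    (h₁ : ContDiffOn ℝ (⊤ : ℕ∞) Z₁ s) (h₂ : ContDiffOn ℝ (⊤ : ℕ∞) Z₂ s) (h₃ : ContDiffOn ℝ (⊤ : ℕ∞) Z₃ s)
    {X X' Y Y' : R4 → R4}
    (hX : ContDiffOn ℝ (⊤ : ℕ∞) X s) (hX' : ContDiffOn ℝ (⊤ : ℕ∞) X' s)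
    (hY : ContDiffOn ℝ (⊤ : ℕ∞) Y s) (hY' : ContDiffOn ℝ (⊤ : ℕ∞) Y' s)
    (mX : ∀ y ∈ s, af Z₁ Z₂ Z₃ y (X y) = 0) (mX' : ∀ y ∈ s, af Z₁ Z₂ Z₃ y (X' y) = 0)
    (mY : ∀ y ∈ s, af Z₁ Z₂ Z₃ y (Y y) = 0) (mY' : ∀ y ∈ s, af Z₁ Z₂ Z₃ y (Y' y) = 0)
    {x : R4} (hx : x ∈ s) (eX : X x = X' x) (eY : Y x = Y' x) :
    af Z₁ Z₂ Z₃ x (lieB X Y x) = af Z₁ Z₂ Z₃ x (lieB X' Y' x) := by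
  have dX := diffAt hs hX hx
  have dX' := diffAt hs hX' hx
  have dY := diffAt hs hY hx
  have dY' := diffAt hs hY' hx
  have k1 : ∀ v, af Z₁ Z₂ Z₃ x (fderiv ℝ (fun y => X y - X' y) x v) = 0 := by
    refine key_zero hs h₁ h₂ h₃ (hX.sub hX') (fun y hy => ?_) hx (by simp [eX])
    rw [af_sub, mX y hy, mX' y hy, sub_zero]
  have k2 : ∀ v, af Z₁ Z₂ Z₃ x (fderiv ℝ (fun y => Y y - Y' y) x v) = 0 := by
    refine key_zero hs h₁ h₂ h₃ (hY.sub hY') (fun y hy => ?_) hx (by simp [eY])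
    rw [af_sub, mY y hy, mY' y hy, sub_zero]
  have heq : lieB X Y x - lieB X' Y' x =
      fderiv ℝ (fun y => Y y - Y' y) x (X x) - fderiv ℝ (fun y => X y - X' y) x (Y x) := by
    simp only [lieB, fderiv_fun_sub dY dY', fderiv_fun_sub dX dX', ContinuousLinearMap.sub_apply,
      ← eX, ← eY]
    abel
  have h0 : af Z₁ Z₂ Z₃ x (lieB X Y x) - af Z₁ Z₂ Z₃ x (lieB X' Y' x) = 0 := by
    rw [← af_sub, heq, af_sub, k1, k2, sub_zero]
  linarith

lemma lieB_combo (hs : IsOpen s)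
    (h₁ : ContDiffOn ℝ (⊤ : ℕ∞) Z₁ s) (h₂ : ContDiffOn ℝ (⊤ : ℕ∞) Z₂ s) (h₃ : ContDiffOn ℝ (⊤ : ℕ∞) Z₃ s)
    {x : R4} (hx : x ∈ s) (a₁ a₂ a₃ b₁ b₂ b₃ : ℝ) :
    af Z₁ Z₂ Z₃ x (lieB (fun y => a₁ • Z₁ y + a₂ • Z₂ y + a₃ • Z₃ y)
        (fun y => b₁ • Z₁ y + b₂ • Z₂ y + b₃ • Z₃ y) x) =
      (a₁*b₂ - a₂*b₁) * af Z₁ Z₂ Z₃ x (lieB Z₁ Z₂ x)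
      + (a₁*b₃ - a₃*b₁) * af Z₁ Z₂ Z₃ x (lieB Z₁ Z₃ x)
      + (a₂*b₃ - a₃*b₂) * af Z₁ Z₂ Z₃ x (lieB Z₂ Z₃ x) := by
  have d₁ := (diffAt hs h₁ hx).hasFDerivAt
  have d₂ := (diffAt hs h₂ hx).hasFDerivAt
  have d₃ := (diffAt hs h₃ hx).hasFDerivAt
  have hA : HasFDerivAt (fun y => a₁ • Z₁ y + a₂ • Z₂ y + a₃ • Z₃ y)
      (a₁ • fderiv ℝ Z₁ x + a₂ • fderiv ℝ Z₂ x + a₃ • fderiv ℝ Z₃ x) x :=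
    ((d₁.const_smul a₁).add (d₂.const_smul a₂)).add (d₃.const_smul a₃)
  have hB : HasFDerivAt (fun y => b₁ • Z₁ y + b₂ • Z₂ y + b₃ • Z₃ y)
      (b₁ • fderiv ℝ Z₁ x + b₂ • fderiv ℝ Z₂ x + b₃ • fderiv ℝ Z₃ x) x :=
    ((d₁.const_smul b₁).add (d₂.const_smul b₂)).add (d₃.const_smul b₃)
  simp only [lieB, hA.fderiv, hB.fderiv, ContinuousLinearMap.add_apply,
    ContinuousLinearMap.coe_smul', Pi.smul_apply, map_add,
    ContinuousLinearMap.map_smul, smul_smul]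
  simp only [smul_add, af_sub, af_add, af_smul, smul_smul]
  ring

end Dep

section SecCombo
variable {U : Set R4} {E : R4 → Submodule ℝ R4} {Z₁ Z₂ Z₃ : R4 → R4} {s : Set R4}

/-- The value of `af x` on a bracket of two local sections of `E` only depends on the
coordinates of their values at `x` in the frame, through an explicit antisymmetric form. -/
lemma section_combo (hs : IsOpen s)
    (h₁ : ContDiffOn ℝ (⊤ : ℕ∞) Z₁ s) (h₂ : ContDiffOn ℝ (⊤ : ℕ∞) Z₂ s) (h₃ : ContDiffOn ℝ (⊤ : ℕ∞) Z₃ s)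
    (hfr : ∀ y ∈ s, LinearIndependent ℝ ![Z₁ y, Z₂ y, Z₃ y] ∧
      E y = Submodule.span ℝ {Z₁ y, Z₂ y, Z₃ y})
    {x : R4} (hx : x ∈ s) {X Y : R4 → R4}
    (hX : IsLocalSectionAt U E X x) (hY : IsLocalSectionAt U E Y x)
    {a₁ a₂ a₃ b₁ b₂ b₃ : ℝ}
    (ha : X x = a₁ • Z₁ x + a₂ • Z₂ x + a₃ • Z₃ x)
    (hb : Y x = b₁ • Z₁ x + b₂ • Z₂ x + b₃ • Z₃ x) :
    af Z₁ Z₂ Z₃ x (lieB X Y x) =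
      (a₁*b₂ - a₂*b₁) * af Z₁ Z₂ Z₃ x (lieB Z₁ Z₂ x)
      + (a₁*b₃ - a₃*b₁) * af Z₁ Z₂ Z₃ x (lieB Z₁ Z₃ x)
      + (a₂*b₃ - a₃*b₂) * af Z₁ Z₂ Z₃ x (lieB Z₂ Z₃ x) := by
  obtain ⟨tX, htXo, _, hxX, hXsm, hXmem⟩ := hX
  obtain ⟨tY, htYo, _, hxY, hYsm, hYmem⟩ := hY
  set t : Set R4 := s ∩ tX ∩ tY with htdef
  have hto : IsOpen t := (hs.inter htXo).inter htYo
  have hxt : x ∈ t := ⟨⟨hx, hxX⟩, hxY⟩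
  have hts : t ⊆ s := fun y hy => hy.1.1
  have h₁' := h₁.mono hts
  have h₂' := h₂.mono hts
  have h₃' := h₃.mono hts
  have hafE : ∀ y ∈ s, ∀ w, w ∈ E y → af Z₁ Z₂ Z₃ y w = 0 := by
    intro y hy w hw
    rw [af_eq_zero_iff (hfr y hy).1]
    rwa [(hfr y hy).2] at hw
  have hcomboSm : ∀ p₁ p₂ p₃ : ℝ,
      ContDiffOn ℝ (⊤ : ℕ∞) (fun y => p₁ • Z₁ y + p₂ • Z₂ y + p₃ • Z₃ y) t := fun p₁ p₂ p₃ =>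
    ((h₁'.const_smul p₁).add (h₂'.const_smul p₂)).add (h₃'.const_smul p₃)
  have hcomboKill : ∀ p₁ p₂ p₃ : ℝ, ∀ y ∈ t,
      af Z₁ Z₂ Z₃ y (p₁ • Z₁ y + p₂ • Z₂ y + p₃ • Z₃ y) = 0 := by
    intro p₁ p₂ p₃ y hy
    rw [af_eq_zero_iff (hfr y (hts hy)).1]
    exact mem_span_triple.2 ⟨p₁, p₂, p₃, rfl⟩
  have hdep : af Z₁ Z₂ Z₃ x (lieB X Y x) =
      af Z₁ Z₂ Z₃ x (lieB (fun y => a₁ • Z₁ y + a₂ • Z₂ y + a₃ • Z₃ y)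
        (fun y => b₁ • Z₁ y + b₂ • Z₂ y + b₃ • Z₃ y) x) := by
    refine bracket_value_dep hto h₁' h₂' h₃'
      (hXsm.mono fun y hy => hy.1.2) (hcomboSm a₁ a₂ a₃)
      (hYsm.mono fun y hy => hy.2) (hcomboSm b₁ b₂ b₃)
      (fun y hy => hafE y (hts hy) _ (hXmem y hy.1.2))
      (hcomboKill a₁ a₂ a₃)
      (fun y hy => hafE y (hts hy) _ (hYmem y hy.2))
      (hcomboKill b₁ b₂ b₃) hxt ha hb
  rw [hdep]
  exact lieB_combo hto h₁' h₂' h₃' hxt a₁ a₂ a₃ b₁ b₂ b₃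

end SecCombo

/-- The pointwise candidate kernel set. -/
def Kset (U : Set R4) (E : R4 → Submodule ℝ R4) (x : R4) : Set R4 :=
  {v | v ∈ E x ∧ ∀ X Y : R4 → R4, IsLocalSectionAt U E X x → IsLocalSectionAt U E Y x →
    X x = v → lieB X Y x ∈ E x}

/-- The candidate kernel distribution. -/
def Wker (U : Set R4) (E : R4 → Submodule ℝ R4) (x : R4) : Submodule ℝ R4 :=
  Submodule.span ℝ (Kset U E x)

lemma main_local (U : Set R4) (E : R4 → Submodule ℝ R4) (hE : IsEvenContactOn U E)
    {q : R4} (hq : q ∈ U) :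
    ∃ (Vf : R4 → R4) (s₀ : Set R4), IsOpen s₀ ∧ s₀ ⊆ U ∧ q ∈ s₀ ∧
      ContDiffOn ℝ (⊤ : ℕ∞) Vf s₀ ∧
      (∀ x ∈ s₀, Vf x ≠ 0 ∧ Vf x ∈ E x ∧
        Kset U E x = ((Submodule.span ℝ {Vf x} : Submodule ℝ R4) : Set R4)) ∧
      ∀ x ∈ s₀, ∀ X Y X' : R4 → R4, IsLocalSectionAt U E X x → IsLocalSectionAt U E Y x →
        IsLocalSectionAt U E X' x → X x = X' x → lieB X' Y x ∈ E x → lieB X Y x ∈ E x := by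
  obtain ⟨Z₁, Z₂, Z₃, s, hs, hsU, hqs, h₁, h₂, h₃, hfr⟩ := hE.1 q hq
  refine ⟨fun y => af Z₁ Z₂ Z₃ y (lieB Z₂ Z₃ y) • Z₁ y
      + (- af Z₁ Z₂ Z₃ y (lieB Z₁ Z₃ y)) • Z₂ y
      + af Z₁ Z₂ Z₃ y (lieB Z₁ Z₂ y) • Z₃ y, s, hs, hsU, hqs, ?_, ?_, ?_⟩
  · exact (((contDiffOn_af h₁ h₂ h₃ (contDiffOn_lieB hs h₂ h₃)).smul h₁).add
      (((contDiffOn_af h₁ h₂ h₃ (contDiffOn_lieB hs h₁ h₃)).neg).smul h₂)).add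
      ((contDiffOn_af h₁ h₂ h₃ (contDiffOn_lieB hs h₁ h₂)).smul h₃)
  · intro x hx
    obtain ⟨hind, hspan⟩ := hfr x hx
    set C12 := af Z₁ Z₂ Z₃ x (lieB Z₁ Z₂ x) with hC12
    set C13 := af Z₁ Z₂ Z₃ x (lieB Z₁ Z₃ x) with hC13
    set C23 := af Z₁ Z₂ Z₃ x (lieB Z₂ Z₃ x) with hC23
    have hEiff : ∀ w, (af Z₁ Z₂ Z₃ x w = 0 ↔ w ∈ E x) := fun w => by
      rw [af_eq_zero_iff hind, ← hspan]
    have hcomboSec : ∀ a₁ a₂ a₃ : ℝ,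
        IsLocalSectionAt U E (fun y => a₁ • Z₁ y + a₂ • Z₂ y + a₃ • Z₃ y) x := by
      intro a₁ a₂ a₃
      refine ⟨s, hs, hsU, hx, ((h₁.const_smul a₁).add (h₂.const_smul a₂)).add
        (h₃.const_smul a₃), fun y hy => ?_⟩
      rw [(hfr y hy).2]
      exact mem_span_triple.2 ⟨a₁, a₂, a₃, rfl⟩
    -- nondegeneracy
    have hne : ¬ (C12 = 0 ∧ C13 = 0 ∧ C23 = 0) := by
      rintro ⟨e1, e2, e3⟩
      obtain ⟨P, Q, hP, hQ, hesc⟩ := hE.2 x (hsU hx)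
      have hPx : P x ∈ E x := by
        obtain ⟨tP, _, _, hxP, _, hPmem⟩ := hP; exact hPmem x hxP
      have hQx : Q x ∈ E x := by
        obtain ⟨tQ, _, _, hxQ, _, hQmem⟩ := hQ; exact hQmem x hxQ
      rw [hspan] at hPx hQx
      obtain ⟨a₁, a₂, a₃, ha⟩ := mem_span_triple.1 hPx
      obtain ⟨b₁, b₂, b₃, hb⟩ := mem_span_triple.1 hQx
      have hcomp := section_combo (U := U) (E := E) hs h₁ h₂ h₃ hfr hx hP hQ ha hb
      rw [← hC12, ← hC13, ← hC23, e1, e2, e3] at hcomp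
      have : af Z₁ Z₂ Z₃ x (lieB P Q x) = 0 := by rw [hcomp]; ring
      exact hesc ((hEiff _).1 this)
    have hVne : (C23 • Z₁ x + (-C13) • Z₂ x + C12 • Z₃ x) ≠ 0 := by
      intro h0
      have hli := Fintype.linearIndependent_iff.1 hind ![C23, -C13, C12] (by
        rw [Fin.sum_univ_three]
        simpa using h0)
      exact hne ⟨hli 2, by have := hli 1; simpa using this, hli 0⟩
    have hVmem : (C23 • Z₁ x + (-C13) • Z₂ x + C12 • Z₃ x) ∈ E x := by
      rw [hspan]; exact mem_span_triple.2 ⟨_, _, _, rfl⟩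
    refine ⟨hVne, hVmem, ?_⟩
    ext v
    constructor
    · rintro ⟨hvE, hvK⟩
      rw [hspan] at hvE
      obtain ⟨a₁, a₂, a₃, hva⟩ := mem_span_triple.1 hvE
      -- three linear equations from bracketing with the frame
      have heq : ∀ b₁ b₂ b₃ : ℝ,
          (a₁*b₂ - a₂*b₁) * C12 + (a₁*b₃ - a₃*b₁) * C13 + (a₂*b₃ - a₃*b₂) * C23 = 0 := by
        intro b₁ b₂ b₃
        have hsec := hvK _ _ (hcomboSec a₁ a₂ a₃) (hcomboSec b₁ b₂ b₃) hva.symm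
        have hcomp := section_combo (U := U) (E := E) hs h₁ h₂ h₃ hfr hx
          (hcomboSec a₁ a₂ a₃) (hcomboSec b₁ b₂ b₃) rfl rfl
        rw [← hC12, ← hC13, ← hC23] at hcomp
        rw [← hcomp]
        exact (hEiff _).2 hsec
      have eq1 := heq 1 0 0
      have eq2 := heq 0 1 0
      have eq3 := heq 0 0 1
      have hexists : ∃ t : ℝ, a₁ = t * C23 ∧ a₂ = -(t * C13) ∧ a₃ = t * C12 := by
        rcases not_and_or.1 hne with h12 | h
        · exact ⟨a₃ / C12, by field_simp; linarith [eq2], by field_simp; linarith [eq1], by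
            field_simp⟩
        rcases not_and_or.1 h with h13 | h23
        · refine ⟨-(a₂ / C13), ?_, ?_, ?_⟩
          · field_simp; linarith [eq3]
          · field_simp
          · field_simp; linarith [eq1]
        · refine ⟨a₁ / C23, ?_, ?_, ?_⟩
          · field_simp
          · field_simp; linarith [eq3]
          · field_simp; linarith [eq2]
      obtain ⟨t, ht1, ht2, ht3⟩ := hexists
      refine Submodule.mem_span_singleton.2 ⟨t, ?_⟩
      rw [hva, ht1, ht2, ht3]
      module
    · intro hv
      obtain ⟨t, ht⟩ := Submodule.mem_span_singleton.1 hv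
      have hveq : v = (t * C23) • Z₁ x + (-(t * C13)) • Z₂ x + (t * C12) • Z₃ x := by
        rw [← ht]; module
      refine ⟨?_, ?_⟩
      · rw [hveq, hspan]; exact mem_span_triple.2 ⟨_, _, _, rfl⟩
      · intro X Y hX hY hXv
        have hYx : Y x ∈ E x := by
          obtain ⟨tY, _, _, hxY, _, hYmem⟩ := hY; exact hYmem x hxY
        rw [hspan] at hYx
        obtain ⟨b₁, b₂, b₃, hb⟩ := mem_span_triple.1 hYx
        have hcomp := section_combo (U := U) (E := E) hs h₁ h₂ h₃ hfr hx hX hY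
          (by rw [hXv, hveq]) hb
        rw [← hC12, ← hC13, ← hC23] at hcomp
        refine (hEiff _).1 ?_
        rw [hcomp]; ring
  · -- value-dependence clause
    intro x hx X Y X' hX hY hX' hXX' hmem
    obtain ⟨hind, hspan⟩ := hfr x hx
    have hEiff : ∀ w, (af Z₁ Z₂ Z₃ x w = 0 ↔ w ∈ E x) := fun w => by
      rw [af_eq_zero_iff hind, ← hspan]
    have hXx : X x ∈ E x := by
      obtain ⟨tX, _, _, hxX, _, hXmem⟩ := hX; exact hXmem x hxX
    have hYx : Y x ∈ E x := by
      obtain ⟨tY, _, _, hxY, _, hYmem⟩ := hY; exact hYmem x hxY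
    rw [hspan] at hXx hYx
    obtain ⟨a₁, a₂, a₃, ha⟩ := mem_span_triple.1 hXx
    obtain ⟨b₁, b₂, b₃, hb⟩ := mem_span_triple.1 hYx
    have hc1 := section_combo (U := U) (E := E) hs h₁ h₂ h₃ hfr hx hX hY ha hb
    have hc2 := section_combo (U := U) (E := E) hs h₁ h₂ h₃ hfr hx hX' hY
      (by rw [← hXX', ha]) hb
    refine (hEiff _).1 ?_
    rw [hc1, ← hc2]
    exact (hEiff _).2 hmem

end S8aux

/-!
Statement 8: every even-contact structure `E` on an open set `U ⊆ ℝ⁴` has a kernel, and the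
kernel is unique: any two kernels coincide at every point of `U`.
-/

theorem statement_8
    (U : Set R4) (hU : IsOpen U)
    (E : R4 → Submodule ℝ R4) (hE : IsEvenContactOn U E) :
    (∃ W : R4 → Submodule ℝ R4, IsKernelOf U E W) ∧
    ∀ W W' : R4 → Submodule ℝ R4,
      IsKernelOf U E W → IsKernelOf U E W' → ∀ q ∈ U, W q = W' q := by
  classical
  have hWval : ∀ x ∈ U, ∃ Vf : R4 → R4, Vf x ≠ 0 ∧ Vf x ∈ E x ∧
      S8aux.Kset U E x = ((Submodule.span ℝ {Vf x} : Submodule ℝ R4) : Set R4) := by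
    intro x hx
    obtain ⟨Vf, s₀, _, _, hxs, _, hprop, _⟩ := S8aux.main_local U E hE hx
    exact ⟨Vf, (hprop x hxs).1, (hprop x hxs).2.1, (hprop x hxs).2.2⟩
  have hWle : ∀ x ∈ U, S8aux.Wker U E x ≤ E x := by
    intro x hx
    obtain ⟨Vf, _, hVmem, hKeq⟩ := hWval x hx
    rw [S8aux.Wker, hKeq, Submodule.span_span, Submodule.span_le,
      Set.singleton_subset_iff]
    exact hVmem
  constructor
  · refine ⟨S8aux.Wker U E, ?_, hWle, ?_⟩
    · -- line field
      intro q hq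
      obtain ⟨Vf, s₀, hso, hs₀U, hqs, hVsm, hprop, _⟩ := S8aux.main_local U E hE hq
      refine ⟨Vf, s₀, hso, hs₀U, hqs, hVsm, fun x hx => ⟨(hprop x hx).1, ?_⟩⟩
      rw [S8aux.Wker, (hprop x hx).2.2, Submodule.span_span]
    · -- brackets of sections of W with sections of E stay in E
      intro q hq V Z hV hZ
      obtain ⟨t, hto, htU, hqt, hVsm', hVmem⟩ := hV
      have hVsecE : IsLocalSectionAt U E V q :=
        ⟨t, hto, htU, hqt, hVsm', fun x hx => hWle x (htU hx) (hVmem x hx)⟩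
      obtain ⟨Vf, _, _, hKeq⟩ := hWval q hq
      have h1 : V q ∈ S8aux.Wker U E q := hVmem q hqt
      rw [S8aux.Wker, hKeq, Submodule.span_span] at h1
      have h2 : V q ∈ S8aux.Kset U E q := by
        rw [hKeq]; exact h1
      exact h2.2 V Z hVsecE hZ rfl
  · -- uniqueness
    intro W W' hW hW' q hq
    obtain ⟨Vf, s₀, hso, hs₀U, hqs, hVsm, hprop, hdep⟩ := S8aux.main_local U E hE hq
    have key : ∀ Wk : R4 → Submodule ℝ R4, IsKernelOf U E Wk →
        Wk q = Submodule.span ℝ {Vf q} := by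
      intro Wk hWk
      obtain ⟨hline, hle, hbr⟩ := hWk
      obtain ⟨Vw, t, hto, htU, hqt, hVwsm, hVwprop⟩ := hline q hq
      have hVwW : ∀ x ∈ t, Vw x ∈ Wk x := fun x hx => by
        rw [(hVwprop x hx).2]; exact Submodule.mem_span_singleton_self _
      have hVwsecW : IsLocalSectionAt U Wk Vw q := ⟨t, hto, htU, hqt, hVwsm, hVwW⟩
      have hVwsecE : IsLocalSectionAt U E Vw q :=
        ⟨t, hto, htU, hqt, hVwsm, fun x hx => hle x (htU hx) (hVwW x hx)⟩
      have hmem : Vw q ∈ S8aux.Kset U E q := by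
        refine ⟨hle q hq (hVwW q hqt), ?_⟩
        intro X Y hX hY hXv
        exact hdep q hqs X Y Vw hX hY hVwsecE hXv (hbr q hq Vw Y hVwsecW hY)
      rw [(hprop q hqs).2.2] at hmem
      obtain ⟨c, hc⟩ := Submodule.mem_span_singleton.1 hmem
      have hcne : c ≠ 0 := by
        intro h0
        apply (hVwprop q hqt).1
        rw [← hc, h0, zero_smul]
      have : Submodule.span ℝ {Vw q} = Submodule.span ℝ {Vf q} := by
        rw [← hc]
        exact Submodule.span_singleton_smul_eq (IsUnit.mk0 c hcne) _
      rw [(hVwprop q hqt).2, this]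
    rw [key W hW, key W' hW']

end
end

section
/- Let D = span{V₁, V₂} be an Engel structure on an open set U ⊆ ℝ⁴, with induced even-contact structure E = span{V₁, V₂, [V₁,V₂]}, and let W be the kernel of E, i.e. the unique line field W ⊆ E such that [V,Z] is a local section of E for all smooth local sections V of W and Z of E. Then W is contained in D, i.e. W(q) ⊆ D(q) for every q ∈ U. -/
noncomputable section

open Set

/-- `V₁, V₂` span an Engel structure on the open set `U ⊆ ℝ⁴`: they are smooth and pointwise
linearly independent, `V₁, V₂, [V₁,V₂]` are pointwise linearly independent on `U` (so
`E = span{V₁, V₂, [V₁,V₂]}` is a 3-plane distribution), and `E` is an even-contact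
structure on `U`. -/
def IsEngelFrameOn (U : Set R4) (V₁ V₂ : R4 → R4) : Prop :=
  ContDiffOn ℝ (⊤ : ℕ∞) V₁ U ∧ ContDiffOn ℝ (⊤ : ℕ∞) V₂ U ∧
  (∀ q ∈ U, LinearIndependent ℝ ![V₁ q, V₂ q]) ∧
  (∀ q ∈ U, LinearIndependent ℝ ![V₁ q, V₂ q, lieB V₁ V₂ q]) ∧
  IsEvenContactOn U (fun q => Submodule.span ℝ {V₁ q, V₂ q, lieB V₁ V₂ q})

section AUX
def detA : R4 [⋀^Fin 4]→ₗ[ℝ] ℝ := (Pi.basisFun ℝ (Fin 4)).det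

lemma detA_apply (m : Fin 4 → R4) :
    detA m = Matrix.det (Matrix.of fun i j => m j i) := by
  rw [detA, Module.Basis.det_apply]
  congr 1

lemma detA_bound (m : Fin 4 → R4) :
    ‖detA m‖ ≤ (Fintype.card (Equiv.Perm (Fin 4)) : ℝ) * ∏ i, ‖m i‖ := by
  rw [detA_apply, Matrix.det_apply']
  refine (norm_sum_le _ _).trans ?_
  have h : ∀ σ : Equiv.Perm (Fin 4),
      ‖(Equiv.Perm.sign σ : ℝ) * ∏ i, (Matrix.of fun i j => m j i) (σ i) i‖ ≤ ∏ i, ‖m i‖ := by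
    intro σ
    rw [norm_mul]
    have hs : ‖((Equiv.Perm.sign σ : ℤ) : ℝ)‖ = 1 := by
      rcases Int.units_eq_one_or (Equiv.Perm.sign σ) with h | h <;> simp [h]
    rw [hs, one_mul, norm_prod]
    refine Finset.prod_le_prod (fun i _ => norm_nonneg _) (fun i _ => ?_)
    exact norm_le_pi_norm (m i) (σ i)
  calc ∑ σ : Equiv.Perm (Fin 4), ‖(Equiv.Perm.sign σ : ℝ) * ∏ i, (Matrix.of fun i j => m j i) (σ i) i‖
      ≤ ∑ _σ : Equiv.Perm (Fin 4), ∏ i, ‖m i‖ := Finset.sum_le_sum fun σ _ => h σ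
    _ = (Fintype.card (Equiv.Perm (Fin 4)) : ℝ) * ∏ i, ‖m i‖ := by
        rw [Finset.sum_const, Finset.card_univ, nsmul_eq_mul]

def detC : ContinuousMultilinearMap ℝ (fun _ : Fin 4 => R4) ℝ :=
  detA.toMultilinearMap.mkContinuous _ detA_bound

@[simp] lemma detC_apply (m : Fin 4 → R4) : detC m = detA m := rfl

lemma detA_ne_zero {v : Fin 4 → R4} (h : LinearIndependent ℝ v) : detA v ≠ 0 := by
  have hcard : Fintype.card (Fin 4) = Module.finrank ℝ R4 := by
    simp [Module.finrank_fin_fun]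
  have hsp := h.span_eq_top_of_card_eq_finrank hcard
  have := (Module.Basis.is_basis_iff_det (Pi.basisFun ℝ (Fin 4))).1 ⟨h, hsp⟩
  exact this.ne_zero

lemma detA_zero_of_mem {w a b c : R4} (h : w ∈ Submodule.span ℝ {a, b, c}) :
    detA ![w, a, b, c] = 0 := by
  refine detA.map_linearDependent _ fun hLI => ?_
  have := (linearIndependent_fin_cons.mp hLI).2
  apply this
  have hset : ({c, b, a} : Set R4) = {a, b, c} := by ext x; constructor <;> (intro hx; simp at hx ⊢; tauto)
  simpa [hset] using h


lemma upd0 (a b c d w : R4) : Function.update ![a,b,c,d] 0 w = ![w,b,c,d] := by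
  funext j; fin_cases j <;> simp [Function.update]
lemma upd1 (a b c d w : R4) : Function.update ![a,b,c,d] 1 w = ![a,w,c,d] := by
  funext j; fin_cases j <;> simp [Function.update]
lemma upd2 (a b c d w : R4) : Function.update ![a,b,c,d] 2 w = ![a,b,w,d] := by
  funext j; fin_cases j <;> simp [Function.update]
lemma upd3 (a b c d w : R4) : Function.update ![a,b,c,d] 3 w = ![a,b,c,w] := by
  funext j; fin_cases j <;> simp [Function.update]

lemma det4_add0 (a a' b c d : R4) :
    detA ![a + a', b, c, d] = detA ![a,b,c,d] + detA ![a',b,c,d] := by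
  have := detA.map_update_add (v := ![a,b,c,d]) 0 a a'
  simpa [upd0] using this
lemma det4_smul0 (r : ℝ) (a b c d : R4) :
    detA ![r • a, b, c, d] = r * detA ![a,b,c,d] := by
  have := detA.map_update_smul (v := ![a,b,c,d]) 0 r a
  simpa [upd0] using this
lemma det4_sub0 (a a' b c d : R4) :
    detA ![a - a', b, c, d] = detA ![a,b,c,d] - detA ![a',b,c,d] := by
  have := detA.map_update_sub (v' := ![a,b,c,d]) 0 a a'
  simpa [upd0] using this
lemma det4_add1 (a b b' c d : R4) :
    detA ![a, b + b', c, d] = detA ![a,b,c,d] + detA ![a,b',c,d] := by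
  have := detA.map_update_add (v := ![a,b,c,d]) 1 b b'
  simpa [upd1] using this
lemma det4_smul1 (r : ℝ) (a b c d : R4) :
    detA ![a, r • b, c, d] = r * detA ![a,b,c,d] := by
  have := detA.map_update_smul (v := ![a,b,c,d]) 1 r b
  simpa [upd1] using this
lemma det4_add2 (a b c c' d : R4) :
    detA ![a, b, c + c', d] = detA ![a,b,c,d] + detA ![a,b,c',d] := by
  have := detA.map_update_add (v := ![a,b,c,d]) 2 c c'
  simpa [upd2] using this
lemma det4_smul2 (r : ℝ) (a b c d : R4) :
    detA ![a, b, r • c, d] = r * detA ![a,b,c,d] := by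
  have := detA.map_update_smul (v := ![a,b,c,d]) 2 r c
  simpa [upd2] using this
lemma det4_add3 (a b c d d' : R4) :
    detA ![a, b, c, d + d'] = detA ![a,b,c,d] + detA ![a,b,c,d'] := by
  have := detA.map_update_add (v := ![a,b,c,d]) 3 d d'
  simpa [upd3] using this
lemma det4_smul3 (r : ℝ) (a b c d : R4) :
    detA ![a, b, c, r • d] = r * detA ![a,b,c,d] := by
  have := detA.map_update_smul (v := ![a,b,c,d]) 3 r d
  simpa [upd3] using this
lemma det4_zero0 (b c d : R4) : detA ![0, b, c, d] = 0 := by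
  have := det4_smul0 0 0 b c d
  simpa using this

/-- The "torsion" trilinear expression. -/
def Tf (A₁ A₂ A₃ : R4 → R4) (q u y : R4) : ℝ :=
  detA ![y, fderiv ℝ A₁ q u, A₂ q, A₃ q] + detA ![y, A₁ q, fderiv ℝ A₂ q u, A₃ q]
    + detA ![y, A₁ q, A₂ q, fderiv ℝ A₃ q u]

/-- The bilinear form representing `w ↦ det(lieB of sections)` at `q`. -/
def Bf (A₁ A₂ A₃ : R4 → R4) (q : R4) (y z : R4) : ℝ :=
  Tf A₁ A₂ A₃ q z y - Tf A₁ A₂ A₃ q y z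

lemma Tf_add_y (A₁ A₂ A₃ : R4 → R4) (q u y y' : R4) :
    Tf A₁ A₂ A₃ q u (y + y') = Tf A₁ A₂ A₃ q u y + Tf A₁ A₂ A₃ q u y' := by
  simp only [Tf, det4_add0]; ring
lemma Tf_smul_y (A₁ A₂ A₃ : R4 → R4) (q u : R4) (r : ℝ) (y : R4) :
    Tf A₁ A₂ A₃ q u (r • y) = r * Tf A₁ A₂ A₃ q u y := by
  simp only [Tf, det4_smul0]; ring
lemma Tf_add_u (A₁ A₂ A₃ : R4 → R4) (q u u' y : R4) :
    Tf A₁ A₂ A₃ q (u + u') y = Tf A₁ A₂ A₃ q u y + Tf A₁ A₂ A₃ q u' y := by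
  simp only [Tf, map_add, det4_add1, det4_add2, det4_add3]; ring
lemma Tf_smul_u (A₁ A₂ A₃ : R4 → R4) (q : R4) (r : ℝ) (u y : R4) :
    Tf A₁ A₂ A₃ q (r • u) y = r * Tf A₁ A₂ A₃ q u y := by
  simp only [Tf, map_smul, det4_smul1, det4_smul2, det4_smul3]; ring
lemma Tf_zero_y (A₁ A₂ A₃ : R4 → R4) (q u : R4) : Tf A₁ A₂ A₃ q u 0 = 0 := by
  have := Tf_smul_y A₁ A₂ A₃ q u (0:ℝ) 0; simpa using this
lemma Tf_zero_u (A₁ A₂ A₃ : R4 → R4) (q y : R4) : Tf A₁ A₂ A₃ q 0 y = 0 := by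
  have := Tf_smul_u A₁ A₂ A₃ q (0:ℝ) 0 y; simpa using this

lemma Bf_antisymm (A₁ A₂ A₃ : R4 → R4) (q y z : R4) :
    Bf A₁ A₂ A₃ q y z = - Bf A₁ A₂ A₃ q z y := by
  simp only [Bf]; ring

/-- Key derivative identity: if `det(Y x, A₁ x, A₂ x, A₃ x) = 0` near `q`, the determinant
of the derivative of `Y` against the frame is expressed through `Tf`. -/
lemma L1 (A₁ A₂ A₃ Y : R4 → R4) (q : R4) (t : Set R4) (ht : IsOpen t) (hqt : q ∈ t)
    (h1 : DifferentiableAt ℝ A₁ q) (h2 : DifferentiableAt ℝ A₂ q)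
    (h3 : DifferentiableAt ℝ A₃ q) (hY : DifferentiableAt ℝ Y q)
    (h0 : ∀ x ∈ t, detA ![Y x, A₁ x, A₂ x, A₃ x] = 0) (u : R4) :
    detA ![fderiv ℝ Y q u, A₁ q, A₂ q, A₃ q] = - Tf A₁ A₂ A₃ q u (Y q) := by
  classical
  set g : Fin 4 → R4 → R4 := ![Y, A₁, A₂, A₃] with hg
  set g' : Fin 4 → (R4 →L[ℝ] R4) :=
    ![fderiv ℝ Y q, fderiv ℝ A₁ q, fderiv ℝ A₂ q, fderiv ℝ A₃ q] with hg'
  have hder : ∀ i, HasFDerivAt (g i) (g' i) q := by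
    intro i
    fin_cases i
    · exact hY.hasFDerivAt
    · exact h1.hasFDerivAt
    · exact h2.hasFDerivAt
    · exact h3.hasFDerivAt
  have H := HasFDerivAt.multilinear_comp (f := detC) hder
  have hm : (fun j => g j q) = ![Y q, A₁ q, A₂ q, A₃ q] := by
    funext j; fin_cases j <;> rfl
  have hzero : fderiv ℝ (fun x => detC fun i => g i x) q = 0 := by
    have hev : (fun x => detC fun i => g i x) =ᶠ[nhds q] (fun _ => (0:ℝ)) := by
      filter_upwards [ht.mem_nhds hqt] with x hx
      have hfam : (fun i => g i x) = ![Y x, A₁ x, A₂ x, A₃ x] := by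
        funext j; fin_cases j <;> rfl
      rw [hfam, detC_apply, h0 x hx]
    rw [hev.fderiv_eq, fderiv_fun_const]
    rfl
  have hcomb := H.fderiv
  rw [hzero] at hcomb
  have happ := congrArg (fun L => L u) hcomb.symm
  simp only [ContinuousLinearMap.zero_apply] at happ
  rw [ContinuousLinearMap.sum_apply] at happ
  rw [Fin.sum_univ_four] at happ
  simp only [ContinuousLinearMap.comp_apply,
    ContinuousMultilinearMap.toContinuousLinearMap_apply, hm] at happ
  have e0 : (g' 0) u = fderiv ℝ Y q u := rfl
  have e1 : (g' 1) u = fderiv ℝ A₁ q u := rfl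
  have e2 : (g' 2) u = fderiv ℝ A₂ q u := rfl
  have e3 : (g' 3) u = fderiv ℝ A₃ q u := rfl
  rw [e0, e1, e2, e3, upd0, upd1, upd2, upd3] at happ
  simp only [detC_apply] at happ
  rw [Tf]
  linarith [happ]

/-- The bracket of two sections of the kernel of `det(·, A₁, A₂, A₃)` pairs through `Bf`. -/
lemma key (A₁ A₂ A₃ Y Z : R4 → R4) (q : R4) (t : Set R4) (ht : IsOpen t) (hqt : q ∈ t)
    (h1 : DifferentiableAt ℝ A₁ q) (h2 : DifferentiableAt ℝ A₂ q)
    (h3 : DifferentiableAt ℝ A₃ q)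
    (hY : DifferentiableAt ℝ Y q) (hZ : DifferentiableAt ℝ Z q)
    (h0Y : ∀ x ∈ t, detA ![Y x, A₁ x, A₂ x, A₃ x] = 0)
    (h0Z : ∀ x ∈ t, detA ![Z x, A₁ x, A₂ x, A₃ x] = 0) :
    detA ![lieB Y Z q, A₁ q, A₂ q, A₃ q] = Bf A₁ A₂ A₃ q (Y q) (Z q) := by
  have hZder := L1 A₁ A₂ A₃ Z q t ht hqt h1 h2 h3 hZ h0Z (Y q)
  have hYder := L1 A₁ A₂ A₃ Y q t ht hqt h1 h2 h3 hY h0Y (Z q)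
  rw [lieB]
  rw [det4_sub0, hZder, hYder, Bf]
  ring

end AUX

/-!
Statement 9: for an Engel structure `D = span{V₁,V₂}` on an open `U ⊆ ℝ⁴`, the kernel `W` of
the induced even-contact structure `E = span{V₁,V₂,[V₁,V₂]}` is contained in `D`.
-/
theorem statement_9
    (U : Set R4) (hU : IsOpen U)
    (V₁ V₂ : R4 → R4) (hEngel : IsEngelFrameOn U V₁ V₂)
    (W : R4 → Submodule ℝ R4)
    (hW : IsKernelOf U (fun q => Submodule.span ℝ {V₁ q, V₂ q, lieB V₁ V₂ q}) W) :
    ∀ q ∈ U, W q ≤ Submodule.span ℝ {V₁ q, V₂ q} := by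
  obtain ⟨hV₁, hV₂, hLI2, hLI3, hECa, hECb⟩ := hEngel
  obtain ⟨hWline, hWsub, hWker⟩ := hW
  intro q hq
  set V₃ : R4 → R4 := lieB V₁ V₂ with hV₃def
  have hV₃ : ContDiffOn ℝ (⊤ : ℕ∞) V₃ U := by
    have hf2 : ContDiffOn ℝ (⊤ : ℕ∞) (fun x => fderiv ℝ V₂ x) U := hV₂.fderiv_of_isOpen hU (by simp)
    have hf1 : ContDiffOn ℝ (⊤ : ℕ∞) (fun x => fderiv ℝ V₁ x) U := hV₁.fderiv_of_isOpen hU (by simp)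
    exact (hf2.clm_apply hV₁).sub (hf1.clm_apply hV₂)
  obtain ⟨V, s, hs, hsU, hqs, hVsm, hVprop⟩ := hWline q hq
  have hWq : W q = Submodule.span ℝ {V q} := (hVprop q hqs).2
  rw [hWq, Submodule.span_le, Set.singleton_subset_iff]
  show V q ∈ (Submodule.span ℝ {V₁ q, V₂ q} : Submodule ℝ R4)
  by_contra hVq
  have hd1 : DifferentiableAt ℝ V₁ q := (hV₁.contDiffAt (hU.mem_nhds hq)).differentiableAt (by simp)
  have hd2 : DifferentiableAt ℝ V₂ q := (hV₂.contDiffAt (hU.mem_nhds hq)).differentiableAt (by simp)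
  have hd3 : DifferentiableAt ℝ V₃ q := (hV₃.contDiffAt (hU.mem_nhds hq)).differentiableAt (by simp)
  have hdV : DifferentiableAt ℝ V q := (hVsm.contDiffAt (hs.mem_nhds hqs)).differentiableAt (by simp)
  have hVmemE : ∀ x ∈ s, V x ∈ Submodule.span ℝ {V₁ x, V₂ x, V₃ x} := by
    intro x hx
    have h1 : V x ∈ W x := by
      rw [(hVprop x hx).2]; exact Submodule.mem_span_singleton_self _
    exact hWsub x (hsU hx) h1
  -- decompose V q
  have hVq3 := hVmemE q hqs
  rw [Submodule.mem_span_insert] at hVq3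
  obtain ⟨a, w1, hw1, hVeq⟩ := hVq3
  rw [Submodule.mem_span_insert] at hw1
  obtain ⟨b, w2, hw2, hw1eq⟩ := hw1
  rw [Submodule.mem_span_singleton] at hw2
  obtain ⟨c, hc⟩ := hw2
  have hVdecomp : V q = a • V₁ q + b • V₂ q + c • V₃ q := by
    rw [hVeq, hw1eq, ← hc]; abel
  have hcne : c ≠ 0 := by
    intro h
    apply hVq
    rw [Submodule.mem_span_pair]
    exact ⟨a, b, by rw [hVdecomp, h, zero_smul, add_zero]⟩
  set S : Set R4 := {V₁ q, V₂ q, V q} with hS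
  have hV₁S : V₁ q ∈ Submodule.span ℝ S := Submodule.subset_span (by simp [hS])
  have hV₂S : V₂ q ∈ Submodule.span ℝ S := Submodule.subset_span (by simp [hS])
  have hVS : V q ∈ Submodule.span ℝ S := Submodule.subset_span (by simp [hS])
  have hV₃S : V₃ q ∈ Submodule.span ℝ S := by
    have h3 : V₃ q = c⁻¹ • (V q - a • V₁ q - b • V₂ q) := by
      rw [hVdecomp]
      have harith : a • V₁ q + b • V₂ q + c • V₃ q - a • V₁ q - b • V₂ q = c • V₃ q := by abel
      rw [harith, smul_smul, inv_mul_cancel₀ hcne, one_smul]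
    rw [h3]
    exact Submodule.smul_mem _ _ (Submodule.sub_mem _
      (Submodule.sub_mem _ hVS (Submodule.smul_mem _ _ hV₁S)) (Submodule.smul_mem _ _ hV₂S))
  have hEleS : Submodule.span ℝ {V₁ q, V₂ q, V₃ q} ≤ Submodule.span ℝ S := by
    rw [Submodule.span_le]
    rintro x (rfl | rfl | rfl)
    · exact hV₁S
    · exact hV₂S
    · exact hV₃S
  obtain ⟨Z₁, Z₂, hZ₁sec, hZ₂sec, hbr⟩ := hECb q hq
  obtain ⟨s₁, hs₁, hs₁U, hqs₁, hZ₁sm, hZ₁mem⟩ := hZ₁sec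
  obtain ⟨s₂, hs₂, hs₂U, hqs₂, hZ₂sm, hZ₂mem⟩ := hZ₂sec
  have hdZ1 : DifferentiableAt ℝ Z₁ q := (hZ₁sm.contDiffAt (hs₁.mem_nhds hqs₁)).differentiableAt (by simp)
  have hdZ2 : DifferentiableAt ℝ Z₂ q := (hZ₂sm.contDiffAt (hs₂.mem_nhds hqs₂)).differentiableAt (by simp)
  -- the bracket escapes, so the determinant is nonzero
  have hLI4 : LinearIndependent ℝ ![lieB Z₁ Z₂ q, V₁ q, V₂ q, V₃ q] := by
    rw [show (![lieB Z₁ Z₂ q, V₁ q, V₂ q, V₃ q]) =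
      Fin.cons (lieB Z₁ Z₂ q) ![V₁ q, V₂ q, V₃ q] from rfl, linearIndependent_fin_cons]
    refine ⟨hLI3 q hq, ?_⟩
    intro hmem
    apply hbr
    have hset : Set.range ![V₁ q, V₂ q, V₃ q] = {V₁ q, V₂ q, V₃ q} := by
      ext x; simp [Matrix.range_cons, Matrix.range_empty]; tauto
    rw [hset] at hmem
    exact hmem
  have hDbr : detA ![lieB Z₁ Z₂ q, V₁ q, V₂ q, V₃ q] ≠ 0 := detA_ne_zero hLI4
  -- sections
  have hsecW : IsLocalSectionAt U W V q :=
    ⟨s, hs, hsU, hqs, hVsm, fun x hx => by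
      rw [(hVprop x hx).2]; exact Submodule.mem_span_singleton_self _⟩
  have hsecE1 : IsLocalSectionAt U (fun x => Submodule.span ℝ {V₁ x, V₂ x, lieB V₁ V₂ x}) V₁ q :=
    ⟨U, hU, subset_rfl, hq, hV₁, fun x _ => Submodule.subset_span (by simp)⟩
  have hsecE2 : IsLocalSectionAt U (fun x => Submodule.span ℝ {V₁ x, V₂ x, lieB V₁ V₂ x}) V₂ q :=
    ⟨U, hU, subset_rfl, hq, hV₂, fun x _ => Submodule.subset_span (by simp)⟩
  -- generator vanishing
  have hYV : ∀ x ∈ s, detA ![V x, V₁ x, V₂ x, V₃ x] = 0 := fun x hx =>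
    detA_zero_of_mem (hVmemE x hx)
  have hrep1 : ∀ x, detA ![V₁ x, V₁ x, V₂ x, V₃ x] = 0 := fun x =>
    detA.map_eq_zero_of_eq _ (show (![V₁ x, V₁ x, V₂ x, V₃ x]) 0 = (![V₁ x, V₁ x, V₂ x, V₃ x]) 1 from rfl) (by decide)
  have hrep2 : ∀ x, detA ![V₂ x, V₁ x, V₂ x, V₃ x] = 0 := fun x =>
    detA.map_eq_zero_of_eq _ (show (![V₂ x, V₁ x, V₂ x, V₃ x]) 0 = (![V₂ x, V₁ x, V₂ x, V₃ x]) 2 from rfl) (by decide)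
  have hBV1 : Bf V₁ V₂ V₃ q (V q) (V₁ q) = 0 := by
    have hk := hWker q hq V V₁ hsecW hsecE1
    have hkey := key V₁ V₂ V₃ V V₁ q s hs hqs hd1 hd2 hd3 hdV hd1 hYV (fun x _ => hrep1 x)
    rw [← hkey]
    exact detA_zero_of_mem hk
  have hBV2 : Bf V₁ V₂ V₃ q (V q) (V₂ q) = 0 := by
    have hk := hWker q hq V V₂ hsecW hsecE2
    have hkey := key V₁ V₂ V₃ V V₂ q s hs hqs hd1 hd2 hd3 hdV hd2 hYV (fun x _ => hrep2 x)
    rw [← hkey]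
    exact detA_zero_of_mem hk
  have hB12 : Bf V₁ V₂ V₃ q (V₁ q) (V₂ q) = 0 := by
    have hkey := key V₁ V₂ V₃ V₁ V₂ q U hU hq hd1 hd2 hd3 hd1 hd2
      (fun x _ => hrep1 x) (fun x _ => hrep2 x)
    rw [← hkey]
    exact detA.map_eq_zero_of_eq _
      (show (![lieB V₁ V₂ q, V₁ q, V₂ q, V₃ q]) 0 = (![lieB V₁ V₂ q, V₁ q, V₂ q, V₃ q]) 3 from rfl)
      (by decide)
  have hdiag : ∀ y, Bf V₁ V₂ V₃ q y y = 0 := fun y => by simp [Bf]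
  have hgen : ∀ g ∈ S, ∀ g' ∈ S, Bf V₁ V₂ V₃ q g g' = 0 := by
    rintro g (rfl | rfl | rfl) g' (rfl | rfl | rfl)
    · exact hdiag _
    · exact hB12
    · rw [Bf_antisymm]; rw [hBV1]; ring
    · rw [Bf_antisymm]; rw [hB12]; ring
    · exact hdiag _
    · rw [Bf_antisymm]; rw [hBV2]; ring
    · exact hBV1
    · exact hBV2
    · exact hdiag _
  have hmain : ∀ y ∈ Submodule.span ℝ S, ∀ z ∈ Submodule.span ℝ S,
      Bf V₁ V₂ V₃ q y z = 0 := by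
    intro y hy z hz
    refine Submodule.span_induction₂ (p := fun y z _ _ => Bf V₁ V₂ V₃ q y z = 0)
      (fun x y hx hy => hgen x hx y hy) ?_ ?_ ?_ ?_ ?_ ?_ hy hz
    · intro z _; simp [Bf, Tf_zero_y, Tf_zero_u]
    · intro y _; simp [Bf, Tf_zero_y, Tf_zero_u]
    · intro x y z _ _ _ h1 h2
      simp only [Bf, Tf_add_y, Tf_add_u] at *
      linarith
    · intro x y z _ _ _ h1 h2
      simp only [Bf, Tf_add_y, Tf_add_u] at *
      linarith
    · intro r x y _ _ h1
      simp only [Bf, Tf_smul_y, Tf_smul_u] at h1 ⊢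
      rw [← mul_sub, h1, mul_zero]
    · intro r x y _ _ h1
      simp only [Bf, Tf_smul_y, Tf_smul_u] at h1 ⊢
      rw [← mul_sub, h1, mul_zero]
  have hZ1S : Z₁ q ∈ Submodule.span ℝ S := hEleS (hZ₁mem q hqs₁)
  have hZ2S : Z₂ q ∈ Submodule.span ℝ S := hEleS (hZ₂mem q hqs₂)
  have hfin := key V₁ V₂ V₃ Z₁ Z₂ q (s₁ ∩ s₂) (hs₁.inter hs₂) ⟨hqs₁, hqs₂⟩ hd1 hd2 hd3 hdZ1 hdZ2
    (fun x hx => detA_zero_of_mem (hZ₁mem x hx.1))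
    (fun x hx => detA_zero_of_mem (hZ₂mem x hx.2))
  exact hDbr (hfin.trans (hmain _ hZ1S _ hZ2S))


end
end
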